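/- arXiv:math/0206258 — 7 statements merged into one kernel-verified Lean document; each statement's English description precedes it below -/
import Mathlib

section
/- If Γ is a poly-torsion-free-abelian (PTFA) group, then the rational group algebra ℚΓ has no zero divisors, i.e. MonoidAlgebra ℚ Γ is an integral domain. -/
/-!
Over a domain `R`, `R[Γ]` has no zero divisors as soon as `Γ` has unique products (Mathlib).
A finitely generated torsion-free abelian group embeds in `ℤⁿ` and so has unique products; as
the property only ever involves finitely many elements, every torsion-free abelian group has it.
Unique products also pass to extensions: given `A` and `B`, take a unique product in the
quotient, then one in the normal subgroup between the two corresponding coset pieces of `A` and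
`B`, translated into it. Going down the PTFA series gives unique products for `Γ`.
-/

open scoped commutatorElement

/-- A group `Γ` is poly-torsion-free-abelian (PTFA) if it admits a finite chain of subgroups
`⊥ = H n ≤ … ≤ H 0 = Γ`, each normal in `Γ`, such that each factor `H i / H (i+1)` is
torsion-free abelian. -/
def IsPTFA (Γ : Type*) [Group Γ] : Prop :=
  ∃ (n : ℕ) (H : ℕ → Subgroup Γ),
    H 0 = ⊤ ∧ H n = ⊥ ∧
    (∀ i < n, H (i + 1) ≤ H i) ∧
    (∀ i ≤ n, (H i).Normal) ∧
    (∀ i < n, ∀ x ∈ H i, ∀ y ∈ H i, ⁅x, y⁆ ∈ H (i + 1)) ∧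
    (∀ i < n, ∀ x ∈ H i, ∀ m : ℤ, 0 < m → x ^ m ∈ H (i + 1) → x ∈ H (i + 1))

open Finset

namespace UniqueMul

variable {G : Type*} [Group G] [DecidableEq G]

theorem of_image_mul_left_mul_right {A B : Finset G} {a b c d : G}
    (h : UniqueMul (A.image (c * ·)) (B.image (· * d)) (c * a) (b * d)) : UniqueMul A B a b := by
  intro a' b' ha' hb' he
  have key : c * a' * (b' * d) = c * a * (b * d) := by
    rw [mul_assoc c, ← mul_assoc a', he]
    group
  simpa using h (mem_image_of_mem _ ha') (mem_image_of_mem _ hb') key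

end UniqueMul

namespace UniqueProds

variable {G : Type*} [Group G]

theorem exists_uniqueMul_of_forall_mem (S : Subgroup G) [UniqueProds S] {A B : Finset G}
    (hA : A.Nonempty) (hB : B.Nonempty) (hAS : ∀ a ∈ A, a ∈ S) (hBS : ∀ b ∈ B, b ∈ S) :
    ∃ a0 ∈ A, ∃ b0 ∈ B, UniqueMul A B a0 b0 := by
  classical
  obtain ⟨a0, ha0, b0, hb0, h⟩ := uniqueMul_of_nonempty
    (map_nonempty.mp (subtype_map_of_mem hAS ▸ hA))
    (map_nonempty.mp (subtype_map_of_mem hBS ▸ hB))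
  have hmap :=
    (UniqueMul.mulHom_map_iff (Function.Embedding.subtype (· ∈ S)) (fun _ _ => rfl)).mpr h
  rw [subtype_map_of_mem hAS, subtype_map_of_mem hBS] at hmap
  exact ⟨a0, mem_subtype.mp ha0, b0, mem_subtype.mp hb0, hmap⟩

theorem of_forall_fg (h : ∀ S : Subgroup G, S.FG → UniqueProds S) : UniqueProds G where
  uniqueMul_of_nonempty {A B} hA hB := by
    classical
    have := h _ ⟨A ∪ B, rfl⟩
    exact exists_uniqueMul_of_forall_mem _ hA hB
      (fun a ha => Subgroup.subset_closure (mem_coe.mpr (mem_union_left B ha)))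
      (fun b hb => Subgroup.subset_closure (mem_coe.mpr (mem_union_right A hb)))

theorem of_quotient (N : Subgroup G) [N.Normal] [UniqueProds N] [UniqueProds (G ⧸ N)] :
    UniqueProds G where
  uniqueMul_of_nonempty {A B} hA hB := by
    classical
    obtain ⟨_, hq, _, hr, hqr⟩ := uniqueMul_of_nonempty
      (hA.image (QuotientGroup.mk' N)) (hB.image (QuotientGroup.mk' N))
    obtain ⟨a0, ha0, rfl⟩ := mem_image.mp hq
    obtain ⟨b0, hb0, rfl⟩ := mem_image.mp hr
    have hA₁ : ∀ x ∈ {a ∈ A | QuotientGroup.mk (s := N) a = a0}.image (a0⁻¹ * ·), x ∈ N := by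
      simp only [mem_image, mem_filter]
      rintro _ ⟨a, ⟨-, ha⟩, rfl⟩
      exact QuotientGroup.eq.mp ha.symm
    have hB₁ : ∀ x ∈ {b ∈ B | QuotientGroup.mk (s := N) b = b0}.image (· * b0⁻¹), x ∈ N := by
      simp only [mem_image, mem_filter]
      rintro _ ⟨b, ⟨-, hb⟩, rfl⟩
      rw [← div_eq_mul_inv]
      exact QuotientGroup.eq_iff_div_mem.mp hb
    have hA₁ne : {a ∈ A | QuotientGroup.mk (s := N) a = a0}.Nonempty :=
      ⟨a0, mem_filter.mpr ⟨ha0, rfl⟩⟩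
    have hB₁ne : {b ∈ B | QuotientGroup.mk (s := N) b = b0}.Nonempty :=
      ⟨b0, mem_filter.mpr ⟨hb0, rfl⟩⟩
    obtain ⟨_, hx, _, hy, hxy⟩ := exists_uniqueMul_of_forall_mem N
      (hA₁ne.image _) (hB₁ne.image _) hA₁ hB₁
    obtain ⟨a1, ha1, rfl⟩ := mem_image.mp hx
    obtain ⟨b1, hb1, rfl⟩ := mem_image.mp hy
    rw [mem_filter] at ha1 hb1
    exact ⟨a1, ha1.1, b1, hb1.1, .of_image_filter (QuotientGroup.mk' N).toMulHom ha1.2 hb1.2 hqr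
      (.of_image_mul_left_mul_right hxy)⟩

end UniqueProds

theorem UniqueProds.of_isMulTorsionFree (G : Type*) [CommGroup G] [IsMulTorsionFree G] :
    UniqueProds G :=
  .of_forall_fg fun S hS =>
    have : Group.FG S := (Group.fg_iff_subgroup_fg S).mpr hS
    inferInstance

theorem Subgroup.uniqueProds_of_le_of_commutator_mem_of_zpow_mem {G : Type*} [Group G]
    {K L : Subgroup G} (hLK : L ≤ K) (hcomm : ∀ x ∈ K, ∀ y ∈ K, ⁅x, y⁆ ∈ L)
    (htf : ∀ x ∈ K, ∀ m : ℤ, 0 < m → x ^ m ∈ L → x ∈ L) [UniqueProds L] : UniqueProds K := by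
  let N := L.subgroupOf K
  have : N.Normal := ⟨fun n hn g => by
    rw [mem_subgroupOf] at hn ⊢
    have : ((g * n * g⁻¹ : K) : G) = ⁅(g : G), (n : G)⁆ * n := by
      simp [commutatorElement_def]
    rw [this]
    exact L.mul_mem (hcomm g g.2 n n.2) hn⟩
  have : UniqueProds N := (subgroupOfEquivOfLe hLK).uniqueProds_iff.mpr ‹_›
  let : CommGroup (K ⧸ N) :=
    { mul_comm := by
        rintro ⟨x⟩ ⟨y⟩
        refine QuotientGroup.eq.mpr (mem_subgroupOf.mpr ?_)
        have : (((x * y)⁻¹ * (y * x) : K) : G) = ⁅(y : G)⁻¹, (x : G)⁻¹⁆ := by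
          simp [commutatorElement_def, mul_assoc]
        rw [this]
        exact hcomm _ (inv_mem y.2) _ (inv_mem x.2) }
  have : IsMulTorsionFree (K ⧸ N) := by
    refine isMulTorsionFree_iff_not_isOfFinOrder.mpr fun q hq hfin => hq ?_
    obtain ⟨m, hm, hqm⟩ := isOfFinOrder_iff_pow_eq_one.mp hfin
    induction q using QuotientGroup.induction_on with
    | H x =>
      rw [← QuotientGroup.mk_pow, QuotientGroup.eq_one_iff, mem_subgroupOf] at hqm
      rw [QuotientGroup.eq_one_iff, mem_subgroupOf]
      exact htf x x.2 m (by exact_mod_cast hm) (by simpa using hqm)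
  have : UniqueProds (K ⧸ N) := UniqueProds.of_isMulTorsionFree _
  exact UniqueProds.of_quotient N

theorem IsPTFA.uniqueProds {Γ : Type*} [Group Γ] (h : IsPTFA Γ) : UniqueProds Γ := by
  obtain ⟨n, H, h0, hn, hle, -, hcomm, htf⟩ := h
  have hH : ∀ i ≤ n, UniqueProds (H i) := by
    intro i hi
    induction hi using Nat.decreasingInduction with
    | self => rw [hn]; exact ⟨fun ⟨a, ha⟩ ⟨b, hb⟩ => ⟨a, ha, b, hb, .of_subsingleton⟩⟩
    | of_succ i hi ih =>
      exact Subgroup.uniqueProds_of_le_of_commutator_mem_of_zpow_mem (hle i hi) (hcomm i hi)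
        (htf i hi)
  have := hH 0 n.zero_le
  rw [h0] at this
  exact Subgroup.topEquiv.uniqueProds_iff.mp this

/-- If `Γ` is PTFA then the rational group algebra `ℚΓ` has no zero divisors, i.e. it is an
integral domain. -/
theorem isDomain_monoidAlgebra_rat_of_isPTFA (Γ : Type*) [Group Γ] (hΓ : IsPTFA Γ) :
    IsDomain (MonoidAlgebra ℚ Γ) :=
  have := hΓ.uniqueProds
  inferInstance
end

section
/- If Γ is a poly-torsion-free-abelian (PTFA) group, then the set of nonzero elements of the rational group algebra ℚΓ satisfies the right Ore condition: for every a ∈ ℚΓ and every nonzero s ∈ ℚΓ there exist b ∈ ℚΓ and a nonzero t ∈ ℚΓ such that a * t = s * b. -/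
/-!
A PTFA group is obtained from the trivial group by finitely many extensions with torsion-free
abelian quotients, and two properties survive such extensions. The first is having unique
products: a torsion-free abelian group embeds in its divisible hull, a `ℚ`-vector space, and in an
extension a unique pair of the quotient is refined to one inside its fibres; this makes `ℚΓ` a
domain. The second is Følner's condition, that every finite `S` admits a nonempty finite `T`
with `|S T| ≤ (1 + ε) |T|`. In an abelian monoid its failure would make `|Sⁿ|` grow exponentially,
while commutativity bounds `|Sⁿ|` polynomially; for an extension one multiplies lifts of a Følner
set of the quotient with a Følner set of the kernel.

Given `a` and `s ≠ 0`, take `T` with `|S T| < 2 |T|` for `S = supp a ∪ supp s`. The linear map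
`(β, τ) ↦ a τ - s β`, from pairs supported on `T` to elements supported on `S T`, then has a
nonzero kernel element, and `τ ≠ 0` there because `s` is not a zero divisor.
-/

open scoped commutatorElement

open Finset Pointwise Module

abbrev QuotientGroup.commGroupOfCommutatorMem {G : Type*} [Group G] (N : Subgroup G) [N.Normal]
    (h : ∀ x y : G, ⁅x, y⁆ ∈ N) : CommGroup (G ⧸ N) where
  mul_comm := by
    rintro ⟨a⟩ ⟨b⟩
    refine QuotientGroup.eq.2 ?_
    simpa [commutatorElement_def, mul_assoc] using h b⁻¹ a⁻¹

theorem QuotientGroup.eq_one_of_pow_eq_one {G : Type*} [Group G] (N : Subgroup G) [N.Normal]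
    (hN : ∀ x : G, ∀ m : ℤ, 0 < m → x ^ m ∈ N → x ∈ N) {x : G ⧸ N} {n : ℕ} (hn : 0 < n)
    (hx : x ^ n = 1) : x = 1 := by
  induction x using QuotientGroup.induction_on with | H x => ?_
  rw [← QuotientGroup.mk_pow, QuotientGroup.eq_one_iff, ← zpow_natCast] at hx
  exact (QuotientGroup.eq_one_iff x).2 (hN x n (by exact_mod_cast hn) hx)

universe u

theorem IsPTFA.induction {P : ∀ (G : Type u) [Group G], Prop}
    (of_mulEquiv : ∀ {G H : Type u} [Group G] [Group H], G ≃* H → P G → P H)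
    (of_commGroup : ∀ (A : Type u) [CommGroup A] [IsMulTorsionFree A], P A)
    (of_normal : ∀ {G : Type u} [Group G] (N : Subgroup G) [N.Normal], P N → P (G ⧸ N) → P G)
    {Γ : Type u} [Group Γ] (hΓ : IsPTFA Γ) : P Γ := by
  obtain ⟨n, H, h0, hn, hle, hnormal, hcomm, htf⟩ := hΓ
  suffices ∀ i ≤ n, P (H i) from of_mulEquiv Subgroup.topEquiv (h0 ▸ this 0 n.zero_le)
  intro i hi
  induction hi using Nat.decreasingInduction with
  | self =>
    have : Subsingleton (H n) := hn ▸ inferInstance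
    let : CommGroup (H n) := { mul_comm := fun _ _ => Subsingleton.elim _ _ }
    exact of_commGroup (H n)
  | of_succ i hi ih =>
    let K := (H (i + 1)).subgroupOf (H i)
    have : (H (i + 1)).Normal := hnormal (i + 1) hi
    let : CommGroup (H i ⧸ K) := QuotientGroup.commGroupOfCommutatorMem K fun x y =>
      Subgroup.mem_subgroupOf.2 (hcomm i hi x x.2 y y.2)
    have : IsMulTorsionFree (H i ⧸ K) := IsMulTorsionFree.of_not_isOfFinOrder fun x hx hfin => by
      obtain ⟨m, hm, hxm⟩ := isOfFinOrder_iff_pow_eq_one.1 hfin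
      refine hx (QuotientGroup.eq_one_of_pow_eq_one K (fun y m hm hy => ?_) hm hxm)
      exact Subgroup.mem_subgroupOf.2 (htf i hi y y.2 m hm (Subgroup.mem_subgroupOf.1 hy))
    exact of_normal K (of_mulEquiv (Subgroup.subgroupOfEquivOfLe (hle i hi)).symm ih)
      (of_commGroup _)

theorem uniqueProds_of_isMulTorsionFree (A : Type*) [CommGroup A] [IsMulTorsionFree A] :
    UniqueProds A :=
  have : UniqueSums (Additive A) := .of_injective_addHom
    (DivisibleHull.coeAddMonoidHom (Additive A)).toAddHom DivisibleHull.coe_injective inferInstance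
  inferInstanceAs (UniqueProds (Multiplicative (Additive A)))

theorem Subgroup.exists_uniqueMul_of_subset_cosets {G : Type*} [Group G] (N : Subgroup G)
    [UniqueProds N] {A B : Finset G} (hA : A.Nonempty) (hB : B.Nonempty) {x y : G}
    (hAx : ∀ a ∈ A, x⁻¹ * a ∈ N) (hBy : ∀ b ∈ B, b * y⁻¹ ∈ N) :
    ∃ a ∈ A, ∃ b ∈ B, UniqueMul A B a b := by
  let A' := A.preimage (fun n : N => x * n) (by simp [Set.InjOn])
  let B' := B.preimage (fun n : N => n * y) (by simp [Set.InjOn])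
  have memA' {n : N} : n ∈ A' ↔ x * n ∈ A := Finset.mem_preimage
  have memB' {n : N} : n ∈ B' ↔ n * y ∈ B := Finset.mem_preimage
  obtain ⟨a, ha⟩ := hA
  obtain ⟨b, hb⟩ := hB
  obtain ⟨n, hn, m, hm, hu⟩ := UniqueProds.uniqueMul_of_nonempty
    ⟨⟨x⁻¹ * a, hAx a ha⟩, memA'.2 (by simpa)⟩ ⟨⟨b * y⁻¹, hBy b hb⟩, memB'.2 (by simpa)⟩
  refine ⟨x * n, memA'.1 hn, m * y, memB'.1 hm, fun a b ha hb hab => ?_⟩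
  have hprod : x⁻¹ * a * (b * y⁻¹) = n * m := by
    rw [← mul_assoc, mul_assoc _ a, hab]
    group
  obtain ⟨rfl, rfl⟩ := hu (a := ⟨x⁻¹ * a, hAx a ha⟩) (b := ⟨b * y⁻¹, hBy b hb⟩)
    (memA'.2 (by simpa)) (memB'.2 (by simpa)) (Subtype.ext hprod)
  simp

theorem UniqueProds.of_normal {G : Type*} [Group G] (N : Subgroup G) [N.Normal] [UniqueProds N]
    [UniqueProds (G ⧸ N)] : UniqueProds G where
  uniqueMul_of_nonempty {A B} hA hB := by
    classical
    let π := (QuotientGroup.mk' N).toMulHom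
    obtain ⟨_, hx, _, hy, hu⟩ := uniqueMul_of_nonempty (hA.image π) (hB.image π)
    obtain ⟨x, hxA, rfl⟩ := mem_image.1 hx
    obtain ⟨y, hyB, rfl⟩ := mem_image.1 hy
    obtain ⟨a, ha, b, hb, hab⟩ := N.exists_uniqueMul_of_subset_cosets (A := {a ∈ A | π a = π x})
      (B := {b ∈ B | π b = π y}) ⟨x, by simp [hxA]⟩ ⟨y, by simp [hyB]⟩
      (fun a ha => QuotientGroup.eq.1 (mem_filter.1 ha).2.symm)
      (fun b hb => ‹N.Normal›.mem_comm (QuotientGroup.eq.1 (mem_filter.1 hb).2.symm))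
    exact ⟨a, (mem_filter.1 ha).1, b, (mem_filter.1 hb).1,
      UniqueMul.of_image_filter π (mem_filter.1 ha).2 (mem_filter.1 hb).2 hu hab⟩

def FolnerCondition (G : Type*) [Mul G] : Prop :=
  ∀ (S : Finset G) (ε : ℝ), 0 < ε →
    ∃ T : Finset G, T.Nonempty ∧ (((S : Set G) * T).ncard : ℝ) ≤ (1 + ε) * #T

theorem folnerCondition_iff {G : Type*} [Mul G] [DecidableEq G] :
    FolnerCondition G ↔ ∀ (S : Finset G) (ε : ℝ), 0 < ε →
      ∃ T : Finset G, T.Nonempty ∧ (#(S * T) : ℝ) ≤ (1 + ε) * #T := by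
  simp only [FolnerCondition, ← coe_mul, Set.ncard_coe_finset]

theorem FolnerCondition.of_mulEquiv {G H : Type*} [Mul G] [Mul H] (e : G ≃* H)
    (hG : FolnerCondition G) : FolnerCondition H := by
  classical
  intro S ε hε
  obtain ⟨T, hT, hST⟩ := hG (S.map e.symm.toEmbedding) ε hε
  refine ⟨T.map e.toEmbedding, hT.map, ?_⟩
  have : ((S : Set H) * ↑(T.map e.toEmbedding)) = e '' (↑(S.map e.symm.toEmbedding) * T) := by
    simp [Set.image_mul, Set.image_image]
  rwa [this, Set.ncard_image_of_injective _ e.injective, card_map]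

theorem Finset.card_pow_le_succ_pow_card {M : Type*} [CommMonoid M] [DecidableEq M]
    (U : Finset M) (n : ℕ) : #(U ^ n) ≤ (n + 1) ^ #U := by
  let E := Fintype.piFinset fun _ : U => range (n + 1)
  have hmem : ∀ x ∈ U ^ n, ∃ f ∈ E, ∏ u : U, (u : M) ^ f u = x := by
    induction n with
    | zero => exact fun x hx => ⟨0, Fintype.mem_piFinset.2 fun _ => by simp, by simp_all⟩
    | succ n ih =>
      intro x hx
      obtain ⟨y, hy, u, hu, rfl⟩ := mem_mul.1 (pow_succ U n ▸ hx)
      obtain ⟨f, hf, rfl⟩ := ih y hy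
      refine ⟨f + Pi.single ⟨u, hu⟩ 1, ?_, ?_⟩
      · simp only [E, Fintype.mem_piFinset, mem_range, Pi.add_apply] at hf ⊢
        intro v
        have := hf v
        have : Pi.single (M := fun _ => ℕ) (⟨u, hu⟩ : U) 1 v ≤ 1 := by
          rcases eq_or_ne v ⟨u, hu⟩ with rfl | hv <;> simp [*]
        omega
      · have hsingle : ∏ v : U, (v : M) ^ Pi.single (M := fun _ => ℕ) ⟨u, hu⟩ 1 v = u :=
          (Fintype.prod_eq_single ⟨u, hu⟩ fun v hv => by simp [hv]).trans (by simp)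
        simp only [Pi.add_apply, pow_add, prod_mul_distrib, hsingle]
  calc #(U ^ n) ≤ #(E.image fun f => ∏ u : U, (u : M) ^ f u) :=
        card_le_card fun x hx => by simpa using hmem x hx
    _ ≤ (n + 1) ^ #U := card_image_le.trans (by simp [E])

theorem Finset.pow_le_card_pow {G : Type*} [Monoid G] [DecidableEq G] {U : Finset G}
    (hU : U.Nonempty) {r : ℝ} (hr : 0 ≤ r) (h : ∀ T : Finset G, T.Nonempty → r * #T ≤ #(U * T))
    (n : ℕ) : r ^ n ≤ #(U ^ n) := by
  induction n with
  | zero => simp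
  | succ n ih =>
    calc r ^ (n + 1) = r * r ^ n := pow_succ' r n
      _ ≤ r * #(U ^ n) := by gcongr
      _ ≤ #(U ^ (n + 1)) := pow_succ' U n ▸ h _ hU.pow

theorem exists_add_one_pow_lt_pow (k : ℕ) {r : ℝ} (hr : 1 < r) :
    ∃ n : ℕ, ((n : ℝ) + 1) ^ k < r ^ n := by
  have hr₀ : 0 < r := zero_lt_one.trans hr
  have hlim := (tendsto_pow_const_div_const_pow_of_one_lt k hr).comp
    (Filter.tendsto_add_atTop_nat 1)
  obtain ⟨n, hn⟩ := (hlim.eventually (gt_mem_nhds (inv_pos.2 hr₀))).exists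
  refine ⟨n, ?_⟩
  rw [Function.comp_apply, div_lt_iff₀ (by positivity), pow_succ, mul_comm, mul_assoc,
    mul_inv_cancel₀ hr₀.ne', mul_one] at hn
  exact_mod_cast hn

theorem FolnerCondition.of_commMonoid (M : Type*) [CommMonoid M] : FolnerCondition M := by
  classical
  rw [folnerCondition_iff]
  intro S ε hε
  by_contra! h
  obtain ⟨n, hn⟩ := exists_add_one_pow_lt_pow #(insert 1 S) (lt_add_of_pos_right 1 hε)
  have hgrowth := (insert 1 S).pow_le_card_pow (insert_nonempty 1 S) (by linarith)
    (fun T hT => (h T hT).le.trans (by gcongr; exact subset_insert 1 S)) n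
  have hpoly : (#(insert 1 S ^ n) : ℝ) ≤ ((n : ℝ) + 1) ^ #(insert 1 S) := by
    exact_mod_cast (insert 1 S).card_pow_le_succ_pow_card n
  linarith

theorem QuotientGroup.card_image_out_mul_map_subtype {G : Type*} [Group G] [DecidableEq G]
    (N : Subgroup G) (Q : Finset (G ⧸ N)) (T : Finset N) :
    #(Q.image Quotient.out * T.map (Function.Embedding.subtype (· ∈ N))) = #Q * #T := by
  rw [card_mul_iff.2, card_image_of_injective _ Quotient.out_injective, card_map]
  rintro ⟨_, _⟩ hlt ⟨_, _⟩ hlt' h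
  simp only [Set.mem_prod, mem_coe, mem_image, mem_map] at hlt hlt' h
  obtain ⟨⟨q, -, rfl⟩, ⟨n, -, rfl⟩⟩ := hlt
  obtain ⟨⟨q', -, rfl⟩, ⟨n', -, rfl⟩⟩ := hlt'
  have hmk (q : G ⧸ N) (n : N) : ((q.out * n : G) : G ⧸ N) = q := by
    rw [QuotientGroup.mk_mul_of_mem _ n.2, QuotientGroup.out_eq']
  obtain rfl : q = q' := by rw [← hmk q n, ← hmk q' n']; exact congrArg _ h
  simp [mul_left_cancel h]

theorem FolnerCondition.of_normal {G : Type*} [Group G] (N : Subgroup G) [N.Normal]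
    (hN : FolnerCondition N) (hQ : FolnerCondition (G ⧸ N)) : FolnerCondition G := by
  classical
  rw [folnerCondition_iff] at hN hQ ⊢
  intro S ε hε
  obtain ⟨δ, hδ, hδε⟩ : ∃ δ : ℝ, 0 < δ ∧ (1 + δ) * (1 + δ) = 1 + ε :=
    ⟨√(1 + ε) - 1, by simp [Real.lt_sqrt]; linarith,
      by rw [add_sub_cancel, Real.mul_self_sqrt (by linarith)]⟩
  let σ : G ⧸ N → G := Quotient.out
  let e (g : G) : N := ⟨(σ g)⁻¹ * g, QuotientGroup.eq.1 (QuotientGroup.out_eq' _)⟩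
  obtain ⟨TQ, hTQ, hSTQ⟩ := hQ (S.image QuotientGroup.mk) δ hδ
  let L := TQ.image σ
  let E := image₂ (fun s l => e (s * l)) S L
  obtain ⟨TN, hTN, hETN⟩ := hN E δ hδ
  let ι := Function.Embedding.subtype (· ∈ N)
  let T := L * TN.map ι
  have hcover : S * T ⊆ (S.image QuotientGroup.mk * TQ).image σ * (E * TN).map ι := by
    intro z hz
    obtain ⟨s, hs, _, ht, rfl⟩ := mem_mul.1 hz
    obtain ⟨l, hl, _, hιn, rfl⟩ := mem_mul.1 ht
    obtain ⟨n, hn, rfl⟩ := mem_map.1 hιn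
    have hsl : s * l = σ (s * l) * e (s * l) := by simp [e]
    rw [← mul_assoc, hsl, mul_assoc]
    refine mul_mem_mul (mem_image_of_mem σ ?_)
      (mem_map.2 ⟨e (s * l) * n, mul_mem_mul (mem_image₂_of_mem hs hl) hn, rfl⟩)
    obtain ⟨q, hq, rfl⟩ := mem_image.1 hl
    rw [QuotientGroup.out_eq']
    exact mul_mem_mul (mem_image_of_mem _ hs) hq
  have hcard : #T = #TQ * #TN := QuotientGroup.card_image_out_mul_map_subtype N TQ TN
  refine ⟨T, (hTQ.image σ).mul hTN.map, ?_⟩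
  calc (#(S * T) : ℝ)
      ≤ #((S.image QuotientGroup.mk * TQ).image σ) * #((E * TN).map ι) := by
        exact_mod_cast (card_le_card hcover).trans card_mul_le
    _ ≤ #(S.image QuotientGroup.mk * TQ) * #(E * TN) := by
        rw [card_map]; gcongr; exact card_image_le
    _ ≤ ((1 + δ) * #TQ) * ((1 + δ) * #TN) := by gcongr
    _ = (1 + ε) * #T := by rw [hcard, ← hδε]; push_cast; ring

namespace MonoidAlgebra

theorem mul_mem_supported {k G : Type*} [Semiring k] [Mul G] {x y : k[G]} {s t : Set G}
    (hx : x ∈ supported k k s) (hy : y ∈ supported k k t) : x * y ∈ supported k k (s * t) := by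
  classical
  rw [mem_supported] at *
  exact (coe_subset.2 (support_coeff_mul_subset x y)).trans (by
    rw [coe_mul]; exact Set.mul_subset_mul hx hy)

variable {k G : Type*} [Field k]

instance (s : Finset G) : FiniteDimensional k (supported k k (s : Set G)) :=
  (supportedEquivFinsupp (s : Set G)).symm.finiteDimensional

theorem finrank_supported (s : Finset G) : finrank k (supported k k (s : Set G)) = #s := by
  simp [(supportedEquivFinsupp (R := k) (S := k) (s : Set G)).finrank_eq]

theorem exists_mul_eq_mul_of_folnerCondition [Mul G] [NoZeroDivisors k[G]]
    (hG : FolnerCondition G) (a : k[G]) {s : k[G]} (hs : s ≠ 0) :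
    ∃ b t : k[G], t ≠ 0 ∧ a * t = s * b := by
  classical
  set U := a.coeff.support ∪ s.coeff.support
  obtain ⟨T, hT, hUT⟩ := folnerCondition_iff.1 hG U (1 / 2) (by norm_num)
  let M := supported k k (T : Set G)
  let F : M × M →ₗ[k] k[G] :=
    LinearMap.mulLeft k a ∘ₗ M.subtype ∘ₗ LinearMap.snd k M M -
      LinearMap.mulLeft k s ∘ₗ M.subtype ∘ₗ LinearMap.fst k M M
  have hF (p : M × M) : F p ∈ supported k k ((U * T : Finset G) : Set G) := by
    rw [coe_mul]
    refine sub_mem (mul_mem_supported ?_ p.2.2) (mul_mem_supported ?_ p.1.2) <;>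
      simp [mem_supported, U]
  have hdim : finrank k (supported k k ((U * T : Finset G) : Set G)) < finrank k (M × M) := by
    rw [finrank_prod, finrank_supported, finrank_supported]
    have : (1 : ℝ) ≤ #T := by exact_mod_cast hT.card_pos
    exact_mod_cast (show (#(U * T) : ℝ) < #T + #T by linarith)
  obtain ⟨⟨β, τ⟩, hker, hne⟩ :=
    Submodule.ne_bot_iff _ |>.1 (LinearMap.ker_ne_bot_of_finrank_lt (f := F.codRestrict _ hF) hdim)
  have heq : a * τ = s * β := sub_eq_zero.1 (congrArg Subtype.val hker)
  refine ⟨β, τ, fun hτ => hne ?_, heq⟩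
  have hβ : (β : k[G]) = 0 := (mul_eq_zero.1 (by rw [← heq, hτ, mul_zero])).resolve_left hs
  exact Prod.ext (Subtype.ext hβ) (Subtype.ext hτ)

end MonoidAlgebra

/-- If `Γ` is PTFA then the nonzero elements of the rational group algebra `ℚΓ` satisfy the
right Ore condition: for every `a` and every nonzero `s` there are `b` and a nonzero `t` with
`a * t = s * b`. -/
theorem rightOre_monoidAlgebra_rat_of_isPTFA (Γ : Type*) [Group Γ] (hΓ : IsPTFA Γ) :
    ∀ (a s : MonoidAlgebra ℚ Γ), s ≠ 0 →
      ∃ (b t : MonoidAlgebra ℚ Γ), t ≠ 0 ∧ a * t = s * b := by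
  have : UniqueProds Γ := hΓ.induction (P := fun G _ => UniqueProds G)
    (fun e h => e.uniqueProds_iff.1 h) (fun A _ _ => uniqueProds_of_isMulTorsionFree A)
    (fun N _ _ _ => .of_normal N)
  have hFolner : FolnerCondition Γ := hΓ.induction (P := fun G _ => FolnerCondition G)
    (fun e h => h.of_mulEquiv e) (fun A _ _ => .of_commMonoid A) (fun N _ => .of_normal N)
  exact fun a s hs => MonoidAlgebra.exists_mul_eq_mul_of_folnerCondition hFolner a hs
end

section
/- Let K be a division ring. Then the Laurent polynomial ring K[t, t⁻¹] (the group algebra of the infinite cyclic group over K, i.e. AddMonoidAlgebra K ℤ) is a principal ideal domain on both sides: every left ideal of K[t, t⁻¹] is principal, and every right ideal of K[t, t⁻¹] is principal. -/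
/-!
Let the width of a nonzero Laurent polynomial be the difference between its largest and smallest
exponents. If `d ≠ 0` is no wider than `g`, subtracting from `g` a suitable monomial multiple
`c tᵃ d` cancels the top coefficient of `g` without leaving its range of exponents, so the width
drops. Hence a nonzero element of minimal width in a left ideal generates it, as in a Euclidean
domain. Right ideals are left ideals of the opposite ring, and `K[ℤ]ᵐᵒᵖ ≃+* Kᵐᵒᵖ[ℤ]` because `ℤ`
is commutative.
-/

open Finset

theorem Ideal.isPrincipal_of_exists_sub_mul_lt {R : Type*} [Ring R] (w : R → ℕ)
    (hw : ∀ g d : R, d ≠ 0 → g ≠ 0 → w d ≤ w g → ∃ q, g - q * d = 0 ∨ w (g - q * d) < w g)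
    (I : Ideal R) : I.IsPrincipal := by
  rcases eq_or_ne I ⊥ with rfl | hI
  · exact bot_isPrincipal
  have hS : {x | x ∈ I ∧ x ≠ 0}.Nonempty := (Submodule.ne_bot_iff I).1 hI
  set d := Function.argminOn w _ hS
  obtain ⟨hdI, hd0⟩ : d ∈ I ∧ d ≠ 0 := Function.argminOn_mem w _ hS
  refine ⟨d, le_antisymm (fun g hgI => ?_) ((span_singleton_le_iff_mem I).2 hdI)⟩
  induction g using (InvImage.wf w wellFounded_lt).induction with
  | _ g ih =>
  by_cases hg0 : g = 0
  · exact hg0 ▸ zero_mem _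
  obtain ⟨q, hq⟩ := hw g d hd0 hg0 (Function.argminOn_le w {x | x ∈ I ∧ x ≠ 0} ⟨hgI, hg0⟩)
  have hqd : q * d ∈ Submodule.span R {d} :=
    Submodule.smul_mem _ q (Submodule.mem_span_singleton_self d)
  rw [← sub_add_cancel g (q * d)]
  refine add_mem ?_ hqd
  rcases hq with hr0 | hlt
  · exact hr0 ▸ zero_mem _
  · exact ih _ hlt (sub_mem hgI (I.mul_mem_left q hdI))

namespace AddMonoidAlgebra

section Ring

variable {R : Type*} [Ring R]

noncomputable def width (f : R[ℤ]) : ℕ :=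
  if h : f.coeff.support.Nonempty then (f.coeff.support.max' h - f.coeff.support.min' h).toNat
  else 0

theorem width_le_of_support_subset_Icc {f : R[ℤ]} {m n : ℤ} (h : f.coeff.support ⊆ Icc m n) :
    f.width ≤ (n - m).toNat := by
  unfold width
  split_ifs with hf
  · have hmax := mem_Icc.1 (h (max'_mem _ hf))
    have hmin := mem_Icc.1 (h (min'_mem _ hf))
    omega
  · exact Nat.zero_le _

theorem support_subset_Icc_min'_max' (f : R[ℤ]) (hf : f.coeff.support.Nonempty) :
    f.coeff.support ⊆ Icc (f.coeff.support.min' hf) (f.coeff.support.max' hf) :=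
  fun _ hy => mem_Icc.2 ⟨min'_le _ _ hy, le_max' _ _ hy⟩

theorem support_single_mul_subset_Icc {f : R[ℤ]} {m n : ℤ} (h : f.coeff.support ⊆ Icc m n)
    (a : ℤ) (c : R) : (single a c * f).coeff.support ⊆ Icc (a + m) (a + n) := by
  intro y hy
  rw [Finsupp.mem_support_iff, coeff_single_mul_apply] at hy
  have := mem_Icc.1 (h (Finsupp.mem_support_iff.2 (right_ne_zero_of_mul hy)))
  exact mem_Icc.2 (by omega)

end Ring

section DivisionRing

variable {K : Type*} [DivisionRing K]

theorem exists_width_sub_single_mul_lt {g d : K[ℤ]} (hd : d ≠ 0) (hg : g ≠ 0)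
    (hw : d.width ≤ g.width) :
    ∃ q, g - q * d = 0 ∨ (g - q * d).width < g.width := by
  classical
  have hgs : g.coeff.support.Nonempty := Finsupp.support_nonempty_iff.2 (coeff_eq_zero.not.2 hg)
  have hds : d.coeff.support.Nonempty := Finsupp.support_nonempty_iff.2 (coeff_eq_zero.not.2 hd)
  set m := g.coeff.support.min' hgs
  set n := g.coeff.support.max' hgs
  set m' := d.coeff.support.min' hds
  set n' := d.coeff.support.max' hds
  have hgw : g.width = (n - m).toNat := dif_pos hgs
  have hdw : d.width = (n' - m').toNat := dif_pos hds
  set q := single (n - n') (g.coeff n * (d.coeff n')⁻¹)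
  have htop : (g - q * d).coeff n = 0 := by
    have hdn' : d.coeff n' ≠ 0 := Finsupp.mem_support_iff.1 (max'_mem _ hds)
    rw [coeff_sub, Finsupp.sub_apply, coeff_single_mul_apply, neg_sub, sub_add_cancel, mul_assoc,
      inv_mul_cancel₀ hdn', mul_one, sub_self]
  have hsub : (g - q * d).coeff.support ⊆ Icc m (n - 1) := by
    intro y hy
    have hyn : y ≠ n := fun h => Finsupp.mem_support_iff.1 hy (h ▸ htop)
    have hy : y ∈ Icc m n := by
      rcases mem_union.1 (Finsupp.support_sub hy) with h | h
      · exact support_subset_Icc_min'_max' g hgs h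
      · have := mem_Icc.1 <|
          support_single_mul_subset_Icc (support_subset_Icc_min'_max' d hds) _ _ h
        exact mem_Icc.2 (by omega)
    exact mem_Icc.2 (by rw [mem_Icc] at hy; omega)
  refine ⟨q, or_iff_not_imp_left.2 fun hr => ?_⟩
  obtain ⟨y, hy⟩ := Finsupp.support_nonempty_iff.2 (coeff_eq_zero.not.2 hr)
  have := mem_Icc.1 (hsub hy)
  have := width_le_of_support_subset_Icc hsub
  omega

instance : IsPrincipalIdealRing K[ℤ] :=
  ⟨Ideal.isPrincipal_of_exists_sub_mul_lt width fun _ _ => exists_width_sub_single_mul_lt⟩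

end DivisionRing

end AddMonoidAlgebra

/-- The Laurent polynomial ring `K[t, t⁻¹]` over a division ring `K` (the group algebra of the
infinite cyclic group over `K`) is a left and right principal ideal domain: every left ideal
and every right ideal is principal. -/
theorem laurent_over_divisionRing_left_right_pid (K : Type*) [DivisionRing K] :
    (∀ I : Ideal (AddMonoidAlgebra K ℤ), I.IsPrincipal) ∧
    (∀ I : Ideal (AddMonoidAlgebra K ℤ)ᵐᵒᵖ, I.IsPrincipal) := by
  let e : (AddMonoidAlgebra K ℤ)ᵐᵒᵖ ≃+* AddMonoidAlgebra Kᵐᵒᵖ ℤ :=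
    AddMonoidAlgebra.opRingEquiv.trans
      (AddMonoidAlgebra.mapDomainRingEquiv Kᵐᵒᵖ AddOpposite.opAddEquiv.symm)
  have := IsPrincipalIdealRing.of_surjective e.symm e.symm.surjective
  exact ⟨IsPrincipalIdealRing.principal, IsPrincipalIdealRing.principal⟩
end

section
/- Let E be a group, k a natural number, t ∈ E, and β an element of the k-th derived subgroup E^{(k)}. Suppose w, η ∈ E satisfy w = ⁅t⁻¹, η⁆ and η = t * ⁅β, w⁆ * t⁻¹. Then both w and η lie in the (k+1)-st derived subgroup E^{(k+1)}. -/
/-!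
Substituting the second relation into the first gives `w = ⁅⁅β, w⁆, t⁆`. Hence if `w` lies in
`E⁽ⁿ⁾` for some `n ≤ k`, then `⁅β, w⁆ ∈ E⁽ⁿ⁺¹⁾`, and so does its commutator with `t` because
`E⁽ⁿ⁺¹⁾` is normal; by induction `w ∈ E⁽ᵏ⁺¹⁾`. Then `η` is a conjugate of `⁅β, w⁆ ∈ E⁽ᵏ⁺¹⁾`.
-/

open scoped commutatorElement

theorem commutatorElement_inv_conj {G : Type*} [Group G] (t c : G) :
    ⁅t⁻¹, t * c * t⁻¹⁆ = ⁅c, t⁆ := by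
  simp only [commutatorElement_def]
  group

theorem Subgroup.Normal.commutatorElement_mem_of_mem_left {G : Type*} [Group G]
    {N : Subgroup G} (hN : N.Normal) {a : G} (ha : a ∈ N) (g : G) : ⁅a, g⁆ ∈ N :=
  Subgroup.commutator_le_left N ⊤ (Subgroup.commutator_mem_commutator ha (Subgroup.mem_top g))

section FixedPoint

variable {G : Type*} [Group G] {β w : G} (t : G)

theorem mem_derivedSeries_succ_of_eq_commutatorElement_of_mem {n : ℕ}
    (hβ : β ∈ derivedSeries G n) (hw : w = ⁅⁅β, w⁆, t⁆) (hwn : w ∈ derivedSeries G n) :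
    w ∈ derivedSeries G (n + 1) :=
  hw ▸ (derivedSeries_normal G (n + 1)).commutatorElement_mem_of_mem_left
    (Subgroup.commutator_mem_commutator hβ hwn) t

theorem mem_derivedSeries_of_eq_commutatorElement {k : ℕ} (hβ : β ∈ derivedSeries G k)
    (hw : w = ⁅⁅β, w⁆, t⁆) : ∀ n ≤ k + 1, w ∈ derivedSeries G n
  | 0, _ => Subgroup.mem_top w
  | n + 1, hn =>
    mem_derivedSeries_succ_of_eq_commutatorElement_of_mem t
      (derivedSeries_antitone G (by omega) hβ) hw
      (mem_derivedSeries_of_eq_commutatorElement hβ hw n (by omega))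

end FixedPoint

/-- If `β ∈ E⁽ᵏ⁾`, `w = ⁅t⁻¹, η⁆` and `η = t * ⁅β, w⁆ * t⁻¹`, then both `w` and `η` lie in
`E⁽ᵏ⁺¹⁾`. -/
theorem mem_derivedSeries_succ_of_commutator_relations {E : Type*} [Group E] (k : ℕ)
    (t β w η : E) (hβ : β ∈ derivedSeries E k)
    (hw : w = ⁅t⁻¹, η⁆) (hη : η = t * ⁅β, w⁆ * t⁻¹) :
    w ∈ derivedSeries E (k + 1) ∧ η ∈ derivedSeries E (k + 1) := by
  have hw_fixed : w = ⁅⁅β, w⁆, t⁆ := hw.trans (hη ▸ commutatorElement_inv_conj t _)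
  have hw_mem : w ∈ derivedSeries E (k + 1) :=
    mem_derivedSeries_of_eq_commutatorElement t hβ hw_fixed _ le_rfl
  have hβw_mem : ⁅β, w⁆ ∈ derivedSeries E (k + 1) :=
    Subgroup.commutator_mem_commutator hβ (derivedSeries_antitone E k.le_succ hw_mem)
  refine ⟨hw_mem, ?_⟩
  exact hη ▸ (derivedSeries_normal E (k + 1)).conj_mem _ hβw_mem t
end

section
/- Let P be a group, k a natural number, t ∈ P, and α an element of the k-th derived subgroup P^{(k)}. Let Q be the free product (coproduct) of P with the free group on one generator z, let η = t * ⁅α⁻¹, t⁻¹ * z⁆ * t⁻¹ ∈ Q (identifying P and z with their images in Q), and let E be the quotient of Q by the normal closure of the single element z⁻¹ * η * t * η⁻¹. Then the homomorphism E → P determined by the identity on P and z ↦ t is a well-defined surjective homomorphism which induces a group isomorphism E/E^{(n)} ≅ P/P^{(n)} for every n ≤ k + 1. -/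
/-!
The projection `φ : E → P` has the section `ι : P → E` induced by the inclusion of `P`, and `E`
is generated by `ι(P)` together with `u = t⁻¹ z`. Since `η = t c t⁻¹` with `c = ⁅α⁻¹, u⁆`, the
relation `z = η t η⁻¹` says exactly that `u = ⁅c, t⁆ = ⁅⁅α⁻¹, u⁆, t⁆`. As `α ∈ E⁽ᵏ⁾`, induction
along the derived series pushes `u` into `E⁽ᵏ⁺¹⁾`. Hence `ι ∘ φ` is the identity modulo `E⁽ⁿ⁾`
for `n ≤ k + 1`, and the map induced by `ι` inverts the one induced by `φ`.
-/

open Monoid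
open scoped commutatorElement

/-- Each term of the derived series is a normal subgroup. -/
instance derivedSeries_normal_inst (G : Type*) [Group G] (n : ℕ) :
    (derivedSeries G n).Normal :=
  derivedSeries_normal G n

variable {P : Type*} [Group P]

/-- The generator `z` of the free factor, inside the free product `P ∗ F(z)`. -/
def knotGenZ (P : Type*) [Group P] : Coprod P (FreeGroup Unit) :=
  Coprod.inr (FreeGroup.of ())

/-- The word `η = t ⁅α⁻¹, t⁻¹ z⁆ t⁻¹` in the free product `P ∗ F(z)`. -/
def knotEta (t α : P) : Coprod P (FreeGroup Unit) :=
  Coprod.inl t *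
    ⁅(Coprod.inl α : Coprod P (FreeGroup Unit))⁻¹,
      (Coprod.inl t : Coprod P (FreeGroup Unit))⁻¹ * knotGenZ P⁆ *
    (Coprod.inl t : Coprod P (FreeGroup Unit))⁻¹

/-- The normal closure of the single relator `z⁻¹ η t η⁻¹`. -/
abbrev knotRelation (t α : P) : Subgroup (Coprod P (FreeGroup Unit)) :=
  Subgroup.normalClosure {(knotGenZ P)⁻¹ * knotEta t α * Coprod.inl t * (knotEta t α)⁻¹}

/-- The group `E = ⟨P, z ∣ z = η t η⁻¹⟩`. -/
abbrev KnotE (t α : P) : Type _ :=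
  Coprod P (FreeGroup Unit) ⧸ knotRelation t α

theorem QuotientGroup.map_bijective_of_rightInverse {G H : Type*} [Group G] [Group H]
    {N : Subgroup G} [N.Normal] {M : Subgroup H} [M.Normal] (φ : G →* H) (ψ : H →* G)
    (hφ : N ≤ M.comap φ) (hψ : M ≤ N.comap ψ) (hφψ : Function.RightInverse ψ φ)
    (hψφ : ∀ g : G, (ψ (φ g) : G ⧸ N) = g) :
    Function.Bijective (QuotientGroup.map N M φ hφ) := by
  refine Function.bijective_iff_has_inverse.mpr ⟨QuotientGroup.map M N ψ hψ, ?_, ?_⟩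
  · rintro ⟨g⟩
    exact hψφ g
  · rintro ⟨h⟩
    exact congrArg _ (hφψ h)

theorem mem_derivedSeries_succ_of_eq_commutator_commutator {G : Type*} [Group G] {k : ℕ}
    {a u t : G} (ha : a ∈ derivedSeries G k) (hu : u = ⁅⁅a, u⁆, t⁆) :
    u ∈ derivedSeries G (k + 1) := by
  suffices ∀ n ≤ k + 1, u ∈ derivedSeries G n from this (k + 1) le_rfl
  intro n hn
  induction n with
  | zero => exact Subgroup.mem_top u
  | succ n ih =>
    have hc : ⁅a, u⁆ ∈ derivedSeries G (n + 1) :=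
      Subgroup.commutator_mem_commutator (derivedSeries_antitone G (by omega) ha) (ih (by omega))
    rw [hu]
    exact Subgroup.commutator_le_left _ ⊤
      (Subgroup.commutator_mem_commutator hc (Subgroup.mem_top t))

theorem inv_mul_eq_commutator_of_eq_conj {G : Type*} [Group G] {a t z : G}
    (h : z = (t * ⁅a, t⁻¹ * z⁆ * t⁻¹) * t * (t * ⁅a, t⁻¹ * z⁆ * t⁻¹)⁻¹) :
    t⁻¹ * z = ⁅⁅a, t⁻¹ * z⁆, t⁆ := by
  generalize ⁅a, t⁻¹ * z⁆ = c at h ⊢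
  subst h
  rw [commutatorElement_def]
  group

def knotProj (t : P) : Coprod P (FreeGroup Unit) →* P :=
  Coprod.lift (MonoidHom.id P) (FreeGroup.lift fun _ => t)

@[simp]
theorem knotProj_inl (t p : P) : knotProj t (Coprod.inl p) = p := by
  simp [knotProj]

@[simp]
theorem knotProj_knotGenZ (t : P) : knotProj t (knotGenZ P) = t := by
  simp [knotProj, knotGenZ]

theorem knotProj_knotEta (t α : P) : knotProj t (knotEta t α) = 1 := by
  simp [knotEta, commutatorElement_def]

theorem knotRelation_le_ker_knotProj (t α : P) : knotRelation t α ≤ (knotProj t).ker := by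
  refine Subgroup.normalClosure_le_normal (Set.singleton_subset_iff.mpr ?_)
  simp [knotProj_knotEta]

namespace KnotE

variable (t α : P)

def proj : KnotE t α →* P :=
  QuotientGroup.lift _ (knotProj t) (knotRelation_le_ker_knotProj t α)

def incl : P →* KnotE t α :=
  (QuotientGroup.mk' _).comp Coprod.inl

abbrev genZ : KnotE t α :=
  QuotientGroup.mk (knotGenZ P)

@[simp]
theorem proj_mk_inl (p : P) : proj t α (QuotientGroup.mk (Coprod.inl p)) = p :=
  knotProj_inl t p

@[simp]
theorem proj_genZ : proj t α (genZ t α) = t :=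
  knotProj_knotGenZ t

theorem proj_incl : Function.RightInverse (incl t α) (proj t α) :=
  proj_mk_inl t α

theorem mk_knotEta :
    (QuotientGroup.mk (knotEta t α) : KnotE t α) =
      incl t α t * ⁅(incl t α α)⁻¹, (incl t α t)⁻¹ * genZ t α⁆ * (incl t α t)⁻¹ :=
  rfl

theorem genZ_eq_conj :
    genZ t α =
      QuotientGroup.mk (knotEta t α) * incl t α t * (QuotientGroup.mk (knotEta t α))⁻¹ :=
  QuotientGroup.eq.mpr <| by
    rw [← mul_assoc, ← mul_assoc]
    exact Subgroup.subset_normalClosure rfl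

theorem inv_mul_genZ_eq_commutator :
    (incl t α t)⁻¹ * genZ t α =
      ⁅⁅(incl t α α)⁻¹, (incl t α t)⁻¹ * genZ t α⁆, incl t α t⁆ := by
  refine inv_mul_eq_commutator_of_eq_conj ?_
  rw [← mk_knotEta]
  exact genZ_eq_conj t α

theorem inv_mul_genZ_mem_derivedSeries {k : ℕ} (hα : α ∈ derivedSeries P k) :
    (incl t α t)⁻¹ * genZ t α ∈ derivedSeries (KnotE t α) (k + 1) :=
  mem_derivedSeries_succ_of_eq_commutator_commutator
    (inv_mem (map_derivedSeries_le_derivedSeries (incl t α) k ⟨α, hα, rfl⟩))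
    (inv_mul_genZ_eq_commutator t α)

theorem incl_proj_mk_derivedSeries {k n : ℕ} (hα : α ∈ derivedSeries P k) (hn : n ≤ k + 1)
    (x : KnotE t α) :
    (incl t α (proj t α x) : KnotE t α ⧸ derivedSeries (KnotE t α) n) = x := by
  have h : (QuotientGroup.mk' _).comp ((incl t α).comp (proj t α)) =
      QuotientGroup.mk' (derivedSeries (KnotE t α) n) := by
    refine QuotientGroup.monoidHom_ext _ (Coprod.hom_ext (MonoidHom.ext fun p => rfl)
      (FreeGroup.ext_hom _ _ fun _ => ?_))
    show QuotientGroup.mk (incl t α (proj t α (genZ t α))) = QuotientGroup.mk (genZ t α)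
    rw [proj_genZ]
    exact QuotientGroup.eq.mpr
      (derivedSeries_antitone _ hn (inv_mul_genZ_mem_derivedSeries t α hα))
  exact DFunLike.congr_fun h x

end KnotE

/-- If `α ∈ P⁽ᵏ⁾`, the homomorphism `E → P` determined by the identity on `P` and `z ↦ t` is a
well-defined surjection inducing isomorphisms `E/E⁽ⁿ⁾ ≅ P/P⁽ⁿ⁾` for all `n ≤ k + 1`. -/
theorem knotE_derived_quotients_iso (k : ℕ) (t α : P) (hα : α ∈ derivedSeries P k) :
    ∃ φ : KnotE t α →* P,
      (∀ p : P, φ (QuotientGroup.mk (Coprod.inl p)) = p) ∧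
      φ (QuotientGroup.mk (knotGenZ P)) = t ∧
      Function.Surjective φ ∧
      ∀ n ≤ k + 1,
        Function.Bijective
          (QuotientGroup.map (derivedSeries (KnotE t α) n) (derivedSeries P n) φ
            (Subgroup.map_le_iff_le_comap.mp (map_derivedSeries_le_derivedSeries φ n))) :=
  ⟨KnotE.proj t α, KnotE.proj_mk_inl t α, KnotE.proj_genZ t α,
    (KnotE.proj_incl t α).surjective, fun n hn =>
      QuotientGroup.map_bijective_of_rightInverse _ (KnotE.incl t α) _
        (Subgroup.map_le_iff_le_comap.mp (map_derivedSeries_le_derivedSeries _ n))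
        (KnotE.proj_incl t α) (KnotE.incl_proj_mk_derivedSeries t α hα hn)⟩
end

section
/- Let G be a group, k a natural number, and b an element of the k-th derived subgroup G^{(k)}. Suppose γ, ℓ ∈ G and a, g ∈ G satisfy γ = ⁅a, ℓ⁆ and ℓ = ⁅g * γ * g⁻¹, b⁆. Then γ lies in the (k+1)-st derived subgroup G^{(k+1)}. -/
/-!
Bootstrap up the derived series: if `γ` and `b` lie in `G⁽ⁿ⁾`, then so does the conjugate
`g γ g⁻¹`, hence `ℓ ∈ G⁽ⁿ⁺¹⁾` and, by normality, `γ = ⁅a, ℓ⁆ ∈ G⁽ⁿ⁺¹⁾`. Since `b ∈ G⁽ⁿ⁾` for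
every `n ≤ k`, this climbs from `G⁽⁰⁾ = G` to `G⁽ᵏ⁺¹⁾`.
-/

open scoped commutatorElement

section

variable {G : Type*} [Group G]

theorem commutatorElement_mem_of_mem_right {N : Subgroup G} [N.Normal] (a : G) {x : G}
    (hx : x ∈ N) : ⁅a, x⁆ ∈ N :=
  Subgroup.commutator_le_right ⊤ N (Subgroup.commutator_mem_commutator (Subgroup.mem_top a) hx)

theorem mem_derivedSeries_succ_of_mem_of_longitude_relations {n : ℕ} {b γ ℓ a g : G}
    (hγn : γ ∈ derivedSeries G n) (hbn : b ∈ derivedSeries G n)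
    (hγ : γ = ⁅a, ℓ⁆) (hℓ : ℓ = ⁅g * γ * g⁻¹, b⁆) :
    γ ∈ derivedSeries G (n + 1) := by
  have := derivedSeries_normal G (n + 1)
  have hconj : g * γ * g⁻¹ ∈ derivedSeries G n := (derivedSeries_normal G n).conj_mem γ hγn g
  have hℓ_mem : ℓ ∈ derivedSeries G (n + 1) := by
    rw [hℓ, derivedSeries_succ]
    exact Subgroup.commutator_mem_commutator hconj hbn
  rw [hγ]
  exact commutatorElement_mem_of_mem_right a hℓ_mem

end

/-- If `b ∈ G⁽ᵏ⁾`, `γ = ⁅a, ℓ⁆` and `ℓ = ⁅g γ g⁻¹, b⁆`, then `γ ∈ G⁽ᵏ⁺¹⁾`. -/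
theorem mem_derivedSeries_succ_of_longitude_relations {G : Type*} [Group G] (k : ℕ)
    (b γ ℓ a g : G) (hb : b ∈ derivedSeries G k)
    (hγ : γ = ⁅a, ℓ⁆) (hℓ : ℓ = ⁅g * γ * g⁻¹, b⁆) :
    γ ∈ derivedSeries G (k + 1) := by
  suffices ∀ n ≤ k + 1, γ ∈ derivedSeries G n from this (k + 1) le_rfl
  intro n hn
  induction n with
  | zero => exact Subgroup.mem_top γ
  | succ n ih =>
    have hbn : b ∈ derivedSeries G n := derivedSeries_antitone G (by omega : n ≤ k) hb
    exact mem_derivedSeries_succ_of_mem_of_longitude_relations (ih (by omega)) hbn hγ hℓ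
end

section
/- Let B = ℤ[t]/(t³ + t − 1), regarded as a ℤ-module (free of rank 3 with basis 1, t, t²), and let T : B → B be the ℤ-linear endomorphism given by multiplication by t. Then the endomorphism Λ²T − id of the second exterior power ⋀² B is injective, and the endomorphism Λ³T of the third exterior power ⋀³ B is the identity. -/
open Polynomial

set_option maxHeartbeats 1000000
set_option synthInstance.maxHeartbeats 200000

/-- A linear endomorphism maps the `n`-th exterior power into itself (under the induced
algebra endomorphism of the exterior algebra). -/
theorem exteriorAlgebra_map_mem_exteriorPower {R M : Type*} [CommRing R] [AddCommGroup M]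
    [Module R M] (f : M →ₗ[R] M) (n : ℕ) :
    ∀ x ∈ ⋀[R]^n M, ExteriorAlgebra.map f x ∈ ⋀[R]^n M := by
  have hι : Submodule.map (ExteriorAlgebra.map f).toLinearMap
      (LinearMap.range (ExteriorAlgebra.ι R : M →ₗ[R] ExteriorAlgebra R M)) ≤
      LinearMap.range (ExteriorAlgebra.ι R : M →ₗ[R] ExteriorAlgebra R M) := by
    rintro y ⟨z, ⟨m, rfl⟩, rfl⟩
    exact ⟨f m, (ExteriorAlgebra.map_apply_ι f m).symm⟩
  have key : ∀ k : ℕ, Submodule.map (ExteriorAlgebra.map f).toLinearMap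
      ((LinearMap.range (ExteriorAlgebra.ι R : M →ₗ[R] ExteriorAlgebra R M)) ^ k) ≤
      (LinearMap.range (ExteriorAlgebra.ι R : M →ₗ[R] ExteriorAlgebra R M)) ^ k := by
    intro k
    induction k with
    | zero => simpa [pow_zero] using le_of_eq (Submodule.map_one (ExteriorAlgebra.map f))
    | succ k ih =>
        rw [pow_succ, Submodule.map_mul]
        exact mul_le_mul' ih hι
  intro x hx
  exact key n ⟨x, hx, rfl⟩

/-- The endomorphism of the `n`-th exterior power `⋀[R]^n M` induced by a linear endomorphism
of `M`. -/
noncomputable def exteriorPowerMap {R M : Type*} [CommRing R] [AddCommGroup M] [Module R M]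
    (n : ℕ) (f : M →ₗ[R] M) : ⋀[R]^n M →ₗ[R] ⋀[R]^n M :=
  (ExteriorAlgebra.map f).toLinearMap.restrict
    (fun x hx => exteriorAlgebra_map_mem_exteriorPower f n x hx)

/-- `B = ℤ[t]/(t³ + t − 1)`. -/
abbrev KnotModuleB : Type :=
  AdjoinRoot ((X : ℤ[X]) ^ 3 + X - 1)

/-- Multiplication by `t` on `B`, as a `ℤ`-linear endomorphism. -/
noncomputable def knotModuleT : KnotModuleB →ₗ[ℤ] KnotModuleB :=
  LinearMap.mulLeft ℤ (AdjoinRoot.root ((X : ℤ[X]) ^ 3 + X - 1))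

/-!
`Λ³T` is multiplication by `det T`, which is `1` (the matrix of `T` in the basis `1, t, t²` is
the companion matrix of `t³ + t − 1`).
The eigenvalues of `Λ²T` are the products `λᵢλⱼ = 1/λₖ` of pairs of roots of `t³ + t − 1`, so its
characteristic polynomial is `x³ − x² − 1`. Hence `Λ²(T²) ∘ (Λ²T − 1) = Λ²(T³) − Λ²(T²) = 1`, an
identity that, after `T³ = 1 − T`, only needs checking on pairs of basis vectors.
-/

open ExteriorAlgebra

theorem exteriorPowerMap_eq_map {R M : Type*} [CommRing R] [AddCommGroup M] [Module R M]
    (n : ℕ) (f : M →ₗ[R] M) : exteriorPowerMap n f = exteriorPower.map n f := by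
  refine exteriorPower.linearMap_ext (AlternatingMap.ext fun v => Subtype.ext ?_)
  simp only [LinearMap.compAlternatingMap_apply, exteriorPower.map_apply_ιMulti,
    exteriorPower.ιMulti_apply_coe]
  exact ExteriorAlgebra.map_apply_ιMulti f v

theorem ExteriorAlgebra.ι_mul_ι_swap {R M : Type*} [CommRing R] [AddCommGroup M] [Module R M]
    (x y : M) : ι R y * ι R x = -(ι R x * ι R y) :=
  eq_neg_of_add_eq_zero_right (ι_add_mul_swap x y)

section TopExteriorPower

variable {R M N ι : Type*} [CommRing R] [AddCommGroup M] [Module R M] [AddCommGroup N]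
  [Module R N] [Fintype ι] [DecidableEq ι]

theorem AlternatingMap.apply_eq_basis_det_smul (e : Module.Basis ι R M)
    (φ : M [⋀^ι]→ₗ[R] N) (v : ι → M) : φ v = e.det v • φ e := by
  suffices φ = e.det.smulRight (φ e) from DFunLike.congr_fun this v
  refine Module.Basis.ext_alternating e fun w hw => ?_
  let σ : Equiv.Perm ι := Equiv.ofBijective w (Finite.injective_iff_bijective.1 hw)
  change φ (e ∘ σ) = e.det (e ∘ σ) • φ e
  simp [AlternatingMap.map_perm, Module.Basis.det_self]

theorem AlternatingMap.apply_comp_eq_det_smul (e : Module.Basis ι R M)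
    (φ : M [⋀^ι]→ₗ[R] N) (f : M →ₗ[R] M) (v : ι → M) :
    φ (f ∘ v) = LinearMap.det f • φ v := by
  rw [φ.apply_eq_basis_det_smul e, φ.apply_eq_basis_det_smul e v, e.det_comp, mul_smul]

theorem exteriorPower.map_eq_det_smul {n : ℕ} (e : Module.Basis (Fin n) R M)
    (f : M →ₗ[R] M) : exteriorPower.map n f = LinearMap.det f • LinearMap.id := by
  refine exteriorPower.linearMap_ext (AlternatingMap.ext fun v => ?_)
  rw [LinearMap.compAlternatingMap_apply, exteriorPower.map_apply_ιMulti]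
  exact (exteriorPower.ιMulti R n).apply_comp_eq_det_smul e f v

end TopExteriorPower

namespace KnotModuleB

open Polynomial

theorem polynomial_monic : ((X : ℤ[X]) ^ 3 + X - 1).Monic := by
  monicity!

theorem polynomial_natDegree : ((X : ℤ[X]) ^ 3 + X - 1).natDegree = 3 := by
  compute_degree!

theorem root_pow_three :
    AdjoinRoot.root ((X : ℤ[X]) ^ 3 + X - 1) ^ 3 =
      1 - AdjoinRoot.root ((X : ℤ[X]) ^ 3 + X - 1) := by
  have h := AdjoinRoot.eval₂_root ((X : ℤ[X]) ^ 3 + X - 1)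
  simp only [eval₂_sub, eval₂_add, eval₂_X_pow, eval₂_X, eval₂_one] at h
  linear_combination h

noncomputable def basis : Module.Basis (Fin 3) ℤ KnotModuleB :=
  (AdjoinRoot.powerBasis' polynomial_monic).basis.reindex (finCongr polynomial_natDegree)

theorem basis_apply (i : Fin 3) :
    basis i = AdjoinRoot.root ((X : ℤ[X]) ^ 3 + X - 1) ^ (i : ℕ) := by
  rw [basis, Module.Basis.reindex_apply, PowerBasis.basis_eq_pow, AdjoinRoot.powerBasis'_gen]
  rfl

theorem knotModuleT_apply (x : KnotModuleB) :
    knotModuleT x = AdjoinRoot.root ((X : ℤ[X]) ^ 3 + X - 1) * x :=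
  rfl

theorem knotModuleT_basis_zero : knotModuleT (basis 0) = basis 1 := by
  simp [knotModuleT_apply, basis_apply]

theorem knotModuleT_basis_one : knotModuleT (basis 1) = basis 2 := by
  simp [knotModuleT_apply, basis_apply, pow_two]

theorem knotModuleT_basis_two : knotModuleT (basis 2) = basis 0 - basis 1 := by
  simp [knotModuleT_apply, basis_apply, ← root_pow_three]
  ring

theorem knotModuleT_cube :
    knotModuleT ∘ₗ knotModuleT ∘ₗ knotModuleT = LinearMap.id - knotModuleT := by
  ext x
  simp only [LinearMap.comp_apply, knotModuleT_apply, LinearMap.sub_apply, LinearMap.id_apply]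
  linear_combination x * root_pow_three

theorem det_knotModuleT : LinearMap.det knotModuleT = 1 := by
  rw [← LinearMap.det_toMatrix basis]
  have : LinearMap.toMatrix basis basis knotModuleT = !![0, 0, 1; 1, 0, -1; 0, 1, 0] := by
    ext i j
    fin_cases i <;> fin_cases j <;>
      simp [LinearMap.toMatrix_apply, knotModuleT_basis_zero, knotModuleT_basis_one,
        knotModuleT_basis_two]
  simp [this, Matrix.det_fin_three]

theorem basis_wedge_identity (a b : Fin 3) :
    ι ℤ (basis a - knotModuleT (basis a)) * ι ℤ (basis b - knotModuleT (basis b)) -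
        ι ℤ (knotModuleT (knotModuleT (basis a))) *
          ι ℤ (knotModuleT (knotModuleT (basis b))) =
      ι ℤ (basis a) * ι ℤ (basis b) := by
  fin_cases a <;> fin_cases b <;>
    simp [knotModuleT_basis_zero, knotModuleT_basis_one, knotModuleT_basis_two, mul_sub, sub_mul,
      ι_mul_ι_swap (basis 1) (basis 0), ι_mul_ι_swap (basis 2) (basis 0),
      ι_mul_ι_swap (basis 2) (basis 1)] <;> abel

theorem map_two_sq_comp_sub_id :
    exteriorPower.map 2 (knotModuleT ∘ₗ knotModuleT) ∘ₗ
      (exteriorPower.map 2 knotModuleT - LinearMap.id) = LinearMap.id := by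
  rw [LinearMap.comp_sub, ← exteriorPower.map_comp, LinearMap.comp_id, LinearMap.comp_assoc,
    knotModuleT_cube]
  refine exteriorPower.linearMap_ext (Module.Basis.ext_alternating basis fun v _ => Subtype.ext ?_)
  simpa [ExteriorAlgebra.ιMulti_apply, Matrix.vecTail] using basis_wedge_identity (v 0) (v 1)

end KnotModuleB

/-- For `B = ℤ[t]/(t³ + t − 1)` and `T` multiplication by `t`, the endomorphism `Λ²T − id` of
`⋀² B` is injective and `Λ³T` is the identity of `⋀³ B`. -/
theorem extPower_knotModule :
    Function.Injective (exteriorPowerMap 2 knotModuleT -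
      (LinearMap.id : ⋀[ℤ]^2 KnotModuleB →ₗ[ℤ] ⋀[ℤ]^2 KnotModuleB)) ∧
    exteriorPowerMap 3 knotModuleT =
      (LinearMap.id : ⋀[ℤ]^3 KnotModuleB →ₗ[ℤ] ⋀[ℤ]^3 KnotModuleB) := by
  rw [exteriorPowerMap_eq_map, exteriorPowerMap_eq_map]
  refine ⟨?_, ?_⟩
  · exact Function.LeftInverse.injective
      (g := exteriorPower.map 2 (knotModuleT ∘ₗ knotModuleT))
      (LinearMap.congr_fun KnotModuleB.map_two_sq_comp_sub_id)
  · rw [exteriorPower.map_eq_det_smul KnotModuleB.basis, KnotModuleB.det_knotModuleT, one_smul]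
end
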